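/- Let n ≥ 1 be an integer. The number of cyclic subgroups of order n of the group (ℤ/nℤ) × (ℤ/nℤ) equals the Dedekind psi function ψ(n) = n · ∏_{p | n, p prime} (1 + 1/p). -/

import Mathlib

open Finset ArithmeticFunction AddSubgroup
open scoped ArithmeticFunction.Moebius

section Counting

variable {n : ℕ} [NeZero n]

theorem L1 (d : ℕ) (hd : d ∣ n) : Nat.card {a : ZMod n // d • a = 0} = d := by
  have hn0 : n ≠ 0 := NeZero.ne n
  have hd0 : d ≠ 0 := by rintro rfl; exact hn0 (Nat.zero_dvd.mp hd)
  have key : ∀ a : ZMod n, d • a = 0 ↔ a ∈ zmultiples (((n / d : ℕ) : ZMod n)) := by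
    intro a
    constructor
    · intro h
      rw [← ZMod.natCast_zmod_val a] at h
      rw [show (d • (a.val : ZMod n)) = ((d * a.val : ℕ) : ZMod n) by push_cast; ring,
        ZMod.natCast_eq_zero_iff] at h
      have hdvd : (n / d) ∣ a.val := by
        obtain ⟨c, hc⟩ := hd
        obtain ⟨e, he⟩ := h
        refine ⟨e, ?_⟩
        have : d * a.val = d * (c * e) := by rw [he, hc]; ring
        have := Nat.eq_of_mul_eq_mul_left (Nat.pos_of_ne_zero hd0) this
        rw [this, hc, Nat.mul_div_cancel_left _ (Nat.pos_of_ne_zero hd0)]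
      obtain ⟨e, he⟩ := hdvd
      refine ⟨(e : ℤ), ?_⟩
      simp only [zsmul_eq_mul]
      rw [← ZMod.natCast_zmod_val a, he]
      push_cast; ring
    · rintro ⟨k, rfl⟩
      have : (d : ℤ) • (((n / d : ℕ) : ZMod n)) = 0 := by
        rw [zsmul_eq_mul]
        rw [show ((d : ℤ) : ZMod n) * ((n / d : ℕ) : ZMod n) = ((d * (n/d) : ℕ) : ZMod n) by push_cast; ring,
          Nat.mul_div_cancel' hd, ZMod.natCast_self]
      calc d • k • (((n / d : ℕ) : ZMod n)) = k • ((d:ℤ) • (((n / d : ℕ) : ZMod n))) := by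
            rw [smul_comm]; norm_cast
        _ = 0 := by rw [this, smul_zero]
  calc Nat.card {a : ZMod n // d • a = 0}
      = Nat.card (zmultiples (((n / d : ℕ) : ZMod n))) :=
        Nat.card_congr (Equiv.subtypeEquivRight key)
    _ = addOrderOf (((n / d : ℕ) : ZMod n)) := Nat.card_zmultiples _
    _ = n / n.gcd (n / d) := ZMod.addOrderOf_coe _ hn0
    _ = d := by rw [Nat.gcd_eq_right (Nat.div_dvd_of_dvd hd), Nat.div_div_self hd hn0]

end Counting

section Counting2
variable {n : ℕ} [NeZero n]

theorem L2 (d : ℕ) (hd : d ∣ n) :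
    Nat.card {x : ZMod n × ZMod n // d • x = 0} = d ^ 2 := by
  have : {x : ZMod n × ZMod n // d • x = 0} ≃
      {a : ZMod n // d • a = 0} × {b : ZMod n // d • b = 0} := by
    refine (Equiv.subtypeEquivRight ?_).trans Equiv.subtypeProdEquivProd
    intro x
    constructor
    · intro h; exact ⟨congrArg Prod.fst h, congrArg Prod.snd h⟩
    · intro h; exact Prod.ext h.1 h.2
  rw [Nat.card_congr this, Nat.card_prod, L1 d hd, sq]

open Classical in
theorem L3 (d : ℕ) (hd : d ∣ n) :
    ∑ m ∈ d.divisors, Nat.card {x : ZMod n × ZMod n // addOrderOf x = m} = d ^ 2 := by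
  have hd0 : d ≠ 0 := by rintro rfl; exact (NeZero.ne n) (Nat.zero_dvd.mp hd)
  rw [← L2 d hd]
  rw [Nat.card_eq_fintype_card, Fintype.card_subtype]
  have hmem : ∀ x ∈ Finset.univ.filter (fun x : ZMod n × ZMod n => d • x = 0),
      addOrderOf x ∈ d.divisors := by
    intro x hx
    simp only [Finset.mem_filter] at hx
    exact Nat.mem_divisors.mpr ⟨addOrderOf_dvd_of_nsmul_eq_zero hx.2, hd0⟩
  rw [Finset.card_eq_sum_card_fiberwise hmem]
  refine Finset.sum_congr rfl fun m hm => ?_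
  rw [Nat.card_eq_fintype_card, Fintype.card_subtype]
  congr 1
  ext x
  simp only [Finset.mem_filter, Finset.mem_univ, true_and]
  constructor
  · rintro rfl
    exact ⟨addOrderOf_dvd_iff_nsmul_eq_zero.mp (Nat.dvd_of_mem_divisors hm), rfl⟩
  · exact fun h => h.2

end Counting2

section Counting3
variable {n : ℕ} [NeZero n]

theorem L4 (H : AddSubgroup (ZMod n × ZMod n)) (hc : Nat.card H = n) (hcy : IsAddCyclic H) :
    Nat.card {p : {x : ZMod n × ZMod n // addOrderOf x = n} // zmultiples (p.1 : ZMod n × ZMod n) = H}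
      = n.totient := by
  classical
  have hord : ∀ y : H, addOrderOf (y : ZMod n × ZMod n) = addOrderOf y :=
    fun y => addOrderOf_injective H.subtype H.subtype_injective y
  have e : {p : {x : ZMod n × ZMod n // addOrderOf x = n} // zmultiples (p.1 : ZMod n × ZMod n) = H}
      ≃ {y : H // addOrderOf y = n} :=
    { toFun := fun p => ⟨⟨p.1.1, (le_of_eq p.2) (mem_zmultiples p.1.1)⟩, by
        rw [← hord]; exact p.1.2⟩
      invFun := fun y => ⟨⟨y.1, by rw [hord]; exact y.2⟩, by
        refine AddSubgroup.eq_of_le_of_card_ge (zmultiples_le.mpr y.1.2) ?_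
        rw [Nat.card_zmultiples, hord, y.2, hc]⟩
      left_inv := fun p => Subtype.ext (Subtype.ext rfl)
      right_inv := fun y => Subtype.ext (Subtype.ext rfl) }
  rw [Nat.card_congr e]
  have : Fintype H := Fintype.ofFinite H
  have hd : n ∣ Fintype.card H := by
    rw [← Nat.card_eq_fintype_card, hc]
  rw [Nat.card_eq_fintype_card, Fintype.card_subtype]
  have := IsAddCyclic.card_addOrderOf_eq_totient (α := H) (d := n) hd
  convert this using 2

theorem isAddCyclic_zmultiples {G : Type*} [AddGroup G] (a : G) :
    IsAddCyclic (zmultiples a) := by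
  refine ⟨⟨⟨a, mem_zmultiples a⟩, ?_⟩⟩
  rintro ⟨y, k, rfl⟩
  exact ⟨k, by ext; simp⟩

def sigmaMap (n : ℕ) [NeZero n] :
    {x : ZMod n × ZMod n // addOrderOf x = n} →
      {H : AddSubgroup (ZMod n × ZMod n) // Nat.card H = n ∧ IsAddCyclic H} := fun x =>
  ⟨zmultiples x.1, by rw [Nat.card_zmultiples]; exact x.2, _root_.isAddCyclic_zmultiples _⟩

theorem L5 :
    Nat.card {x : ZMod n × ZMod n // addOrderOf x = n}
      = Nat.card {H : AddSubgroup (ZMod n × ZMod n) //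
          Nat.card H = n ∧ IsAddCyclic H} * n.totient := by
  classical
  have hfin : Finite (AddSubgroup (ZMod n × ZMod n)) :=
    Finite.of_injective _ (SetLike.coe_injective (A := AddSubgroup (ZMod n × ZMod n)))
  have hT : Fintype {H : AddSubgroup (ZMod n × ZMod n) // Nat.card H = n ∧ IsAddCyclic H} :=
    Fintype.ofFinite _
  rw [Nat.card_congr (Equiv.sigmaFiberEquiv (sigmaMap n)).symm, Nat.card_eq_fintype_card,
    Fintype.card_sigma]
  have key : ∀ H : {H : AddSubgroup (ZMod n × ZMod n) // Nat.card H = n ∧ IsAddCyclic H},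
      Fintype.card {x // sigmaMap n x = H} = n.totient := by
    intro H
    rw [← Nat.card_eq_fintype_card]
    have e2 : {x // sigmaMap n x = H} ≃ {p : {x : ZMod n × ZMod n // addOrderOf x = n} //
        zmultiples (p.1 : ZMod n × ZMod n) = H.1} :=
      Equiv.subtypeEquivRight fun p => by
        constructor
        · intro h; exact congrArg Subtype.val h
        · intro h; exact Subtype.ext h
    rw [Nat.card_congr e2]
    exact L4 H.1 H.2.1 H.2.2
  simp only [key, Finset.sum_const, Finset.card_univ, smul_eq_mul]
  rw [Nat.card_eq_fintype_card]

end Counting3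

open ArithmeticFunction in
theorem Fppow {p : ℕ} (hpp : p.Prime) {k : ℕ} (hk : k ≠ 0) :
    (((μ : ArithmeticFunction ℤ) : ArithmeticFunction ℚ) *
      ((pow 2 : ArithmeticFunction ℕ) : ArithmeticFunction ℚ)) (p ^ k)
      = ((p : ℚ) ^ k) ^ 2 * (1 - ((p : ℚ)⁻¹) ^ 2) := by
  have hp0 : (p : ℚ) ≠ 0 := Nat.cast_ne_zero.mpr hpp.pos.ne'
  have hk1 : 1 ≤ k := Nat.one_le_iff_ne_zero.mpr hk
  rw [mul_apply, Nat.sum_divisorsAntidiagonal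
      (fun d e => (((μ : ArithmeticFunction ℤ) : ArithmeticFunction ℚ) d) *
        (((pow 2 : ArithmeticFunction ℕ) : ArithmeticFunction ℚ) e)),
    Nat.sum_divisors_prime_pow hpp]
  have hterm : ∀ i ∈ Finset.range (k + 1),
      (((μ : ArithmeticFunction ℤ) : ArithmeticFunction ℚ) (p ^ i)) *
        (((pow 2 : ArithmeticFunction ℕ) : ArithmeticFunction ℚ) (p ^ k / p ^ i))
      = (if i = 0 then ((p:ℚ) ^ k) ^ 2 else if i = 1 then -((p:ℚ) ^ (k-1)) ^ 2 else 0) := by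
    intro i hi
    rw [Finset.mem_range] at hi
    have hdiv : p ^ k / p ^ i = p ^ (k - i) := Nat.pow_div (by omega) hpp.pos
    rw [hdiv, intCoe_apply, natCoe_apply, pow_apply]
    rcases i with _ | i
    · simp [moebius_apply_one]
    · rw [moebius_apply_prime_pow hpp (Nat.succ_ne_zero i)]
      rcases eq_or_ne i 0 with rfl | hi0
      · simp
      · have : ¬(i + 1 = 1) := by omega
        simp [this, hpp.pos.ne', hi0]
  rw [Finset.sum_congr rfl hterm]
  have split : ∀ x ∈ Finset.range (k + 1),
      (if x = 0 then ((p:ℚ) ^ k) ^ 2 else if x = 1 then -((p:ℚ) ^ (k-1)) ^ 2 else 0)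
        = (if x = 0 then ((p:ℚ) ^ k) ^ 2 else 0) + (if x = 1 then -((p:ℚ) ^ (k-1)) ^ 2 else 0) := by
    intro x _
    rcases eq_or_ne x 0 with rfl | h0
    · simp
    · rcases eq_or_ne x 1 with rfl | h1
      · simp
      · simp [h0, h1]
  rw [Finset.sum_congr rfl split, Finset.sum_add_distrib,
    Finset.sum_ite_eq' (Finset.range (k+1)) 0, Finset.sum_ite_eq' (Finset.range (k+1)) 1,
    if_pos (Finset.mem_range.mpr (by omega)), if_pos (Finset.mem_range.mpr (by omega))]
  have hpk : (p:ℚ) ^ (k-1) * (p:ℚ) = (p:ℚ) ^ k := by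
    rw [← pow_succ, Nat.sub_add_cancel hk1]
  have h2 : ((p:ℚ) ^ (k-1)) ^ 2 = ((p:ℚ) ^ k) ^ 2 * ((p:ℚ)⁻¹) ^ 2 := by
    rw [← hpk]
    field_simp
  rw [h2]
  ring

open ArithmeticFunction in
theorem L6 (n : ℕ) (hn : n ≠ 0) :
    (∑ x ∈ n.divisorsAntidiagonal, (μ x.1 : ℚ) * ((x.2 : ℚ) ^ 2))
      = (n : ℚ) ^ 2 * ∏ p ∈ n.primeFactors, (1 - ((p : ℚ)⁻¹) ^ 2) := by
  set F : ArithmeticFunction ℚ :=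
    ((μ : ArithmeticFunction ℤ) : ArithmeticFunction ℚ) *
      ((pow 2 : ArithmeticFunction ℕ) : ArithmeticFunction ℚ) with hFdef
  have hF : F.IsMultiplicative :=
    (isMultiplicative_moebius.intCast).mul (isMultiplicative_pow.natCast)
  have hsum : (∑ x ∈ n.divisorsAntidiagonal, (μ x.1 : ℚ) * ((x.2 : ℚ) ^ 2)) = F n := by
    rw [hFdef, mul_apply]
    refine Finset.sum_congr rfl fun x hx => ?_
    rw [intCoe_apply, natCoe_apply, pow_apply]
    norm_num
  have hsupp : n.factorization.support = n.primeFactors := Nat.support_factorization n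
  have hn' : (n : ℚ) = ∏ p ∈ n.primeFactors, (p : ℚ) ^ (n.factorization p) := by
    conv_lhs => rw [← Nat.factorization_prod_pow_eq_self hn]
    rw [Finsupp.prod, hsupp]
    push_cast
    rfl
  have key : ∀ p ∈ n.primeFactors,
      F (p ^ n.factorization p) = ((p : ℚ) ^ (n.factorization p)) ^ 2 * (1 - ((p : ℚ)⁻¹) ^ 2) := by
    intro p hp
    have hpp : p.Prime := Nat.prime_of_mem_primeFactors hp
    have hk : n.factorization p ≠ 0 := by
      rw [← Finsupp.mem_support_iff, hsupp]; exact hp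
    exact Fppow hpp hk
  rw [hsum, hF.multiplicative_factorization F hn, Finsupp.prod, hsupp,
    Finset.prod_congr rfl key, hn', ← Finset.prod_pow, ← Finset.prod_mul_distrib]


theorem stmt_15 (n : ℕ) (hn : 1 ≤ n) :
    (Nat.card {H : AddSubgroup (ZMod n × ZMod n) //
        Nat.card H = n ∧ IsAddCyclic H} : ℚ)
      = n * ∏ p ∈ n.primeFactors, (1 + 1 / (p : ℚ)) := by
  haveI : NeZero n := ⟨by omega⟩
  have hn0 : n ≠ 0 := by omega
  have hinv := (ArithmeticFunction.sum_eq_iff_sum_mul_moebius_eq_on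
      (f := fun m => (Nat.card {x : ZMod n × ZMod n // addOrderOf x = m} : ℚ))
      (g := fun m => (m : ℚ) ^ 2)
      {m | m ∣ n} (fun a b hab hb => hab.trans hb)).mp
      (fun d _hd0 hdvd => by exact_mod_cast congrArg (Nat.cast : ℕ → ℚ) (L3 d hdvd))
      n (by omega) (dvd_refl n)
  rw [L6 n hn0] at hinv
  have h5 : ((Nat.card {x : ZMod n × ZMod n // addOrderOf x = n} : ℚ))
      = (Nat.card {H : AddSubgroup (ZMod n × ZMod n) //
          Nat.card H = n ∧ IsAddCyclic H} : ℚ) * (n.totient : ℚ) := by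
    exact_mod_cast congrArg (Nat.cast : ℕ → ℚ) (L5 (n := n))
  have htot : (n.totient : ℚ) = n * ∏ p ∈ n.primeFactors, (1 - (p : ℚ)⁻¹) :=
    Nat.totient_eq_mul_prod_factors n
  have htot0 : (n.totient : ℚ) ≠ 0 := by
    exact_mod_cast (Nat.totient_pos.mpr (by omega)).ne'
  have hprod : ∏ p ∈ n.primeFactors, (1 - ((p : ℚ)⁻¹) ^ 2)
      = (∏ p ∈ n.primeFactors, (1 + 1 / (p : ℚ))) *
          ∏ p ∈ n.primeFactors, (1 - (p : ℚ)⁻¹) := by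
    rw [← Finset.prod_mul_distrib]
    refine Finset.prod_congr rfl fun p _ => ?_
    rw [one_div]
    ring
  apply mul_right_cancel₀ htot0
  rw [← h5, ← hinv, hprod, htot]
  ring
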